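/- arXiv:1202.0276 — 7 statements merged into one kernel-verified Lean document; each statement's English description precedes it below -/
import Mathlib

section
/- The sequence g defined by g(1) = 1 and g(n) = g(n - g(n-1)) + 1 for n ≥ 2 satisfies the closed form g(n) = ⌊(⌊√(8n)⌋ + 1)/2⌋ for all positive integers n. -/
/-- if T(k-1) < n ≤ T(k) then the closed form at n equals k -/
lemma fval (k n : ℕ) (hk : 1 ≤ k) (hlo : k*k + 1 ≤ 2*n + k) (hhi : 2*n ≤ k*k + k) :
    (Nat.sqrt (8*n) + 1) / 2 = k := by
  obtain ⟨q, rfl⟩ : ∃ q, k = q + 1 := ⟨k - 1, by omega⟩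
  have hs1 : 2*q + 1 ≤ Nat.sqrt (8*n) := by
    apply Nat.le_sqrt'.mpr
    nlinarith
  have hs2 : Nat.sqrt (8*n) < 2*q + 3 := by
    apply Nat.sqrt_lt'.mpr
    nlinarith
  omega

lemma finv (n m : ℕ) (hn : 1 ≤ n) (hm : m = (Nat.sqrt (8*n) + 1) / 2) :
    1 ≤ m ∧ m*m + 1 ≤ 2*n + m ∧ 2*n ≤ m*m + m := by
  have h1 : Nat.sqrt (8*n) * Nat.sqrt (8*n) ≤ 8*n := Nat.sqrt_le _
  have h2 : 8*n < (Nat.sqrt (8*n) + 1) * (Nat.sqrt (8*n) + 1) := Nat.lt_succ_sqrt _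
  have h3 : 2 ≤ Nat.sqrt (8*n) := Nat.le_sqrt'.mpr (by omega)
  obtain ⟨q, hq⟩ : ∃ q, m = q + 1 := ⟨m - 1, by omega⟩
  subst hq
  refine ⟨by omega, ?_, ?_⟩ <;>
  · rcases (show Nat.sqrt (8*n) = 2*q + 1 ∨ Nat.sqrt (8*n) = 2*q + 2 by omega) with h | h <;>
    rw [h] at h1 h2 <;> nlinarith

/-- Golomb's triangular recursion: `g 1 = 1`, `g n = g (n - g (n-1)) + 1` for `n ≥ 2`,
    has the closed form `g n = ⌊(⌊√(8n)⌋ + 1)/2⌋`. -/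
theorem golomb_closed_form (g : ℕ → ℕ)
    (h1 : g 1 = 1)
    (hrec : ∀ n, 2 ≤ n → g n = g (n - g (n - 1)) + 1) :
    ∀ n, 1 ≤ n → g n = (Nat.sqrt (8 * n) + 1) / 2 := by
  intro n
  induction n using Nat.strong_induction_on with
  | _ n ih =>
    intro hn
    rcases eq_or_lt_of_le hn with h | h
    · rw [← h, h1]; exact (fval 1 1 le_rfl (by norm_num) (by norm_num)).symm
    · have hn2 : 2 ≤ n := h
      have hprev : g (n-1) = (Nat.sqrt (8*(n-1)) + 1) / 2 := ih (n-1) (by omega) (by omega)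
      obtain ⟨m, hm⟩ : ∃ m, m = (Nat.sqrt (8*(n-1)) + 1) / 2 := ⟨_, rfl⟩
      rw [← hm] at hprev
      obtain ⟨hm1, hm2, hm3⟩ := finv (n-1) m (by omega) hm
      obtain ⟨t, ht⟩ := Nat.even_mul_succ_self m
      have ht' : m*m + m = t + t := by rw [← ht]; ring
      have hmm : m ≤ m*m := Nat.le_mul_of_pos_left m (by omega)
      rw [hrec n hn2, hprev]
      by_cases hc : 2*(n-1) = m*m + m
      · -- n = T(m) + 1, so g n = m + 1
        have hab : (m+1)*(m+1) = m*m + 2*m + 1 := by ring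
        have hfn : (Nat.sqrt (8*n) + 1) / 2 = m + 1 :=
          fval (m+1) n (by omega) (by omega) (by omega)
        have hnm1 : 1 ≤ n - m := by omega
        have hnm : g (n - m) = m := by
          rw [ih (n-m) (by omega) hnm1]
          exact fval m (n-m) hm1 (by omega) (by omega)
        rw [hnm, hfn]
      · -- T(m-1) < n ≤ T(m), so g n = m
        obtain ⟨q, rfl⟩ : ∃ q, m = q + 1 := ⟨m - 1, by omega⟩
        have hab : (q+1)*(q+1) = q*q + 2*q + 1 := by ring
        have hqb : q ≤ q*q ∨ q = 0 := by
          rcases Nat.eq_zero_or_pos q with h' | h'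
          · right; exact h'
          · left; exact Nat.le_mul_of_pos_left q h'
        have hq2 : 1 ≤ q := by
          rcases Nat.eq_zero_or_pos q with h' | h'
          · subst h'; simp at hab hm2 hm3 hc ⊢; omega
          · exact h'
        have hqq : q ≤ q*q := by rcases hqb with h'|h'; exact h'; omega
        have hfn : (Nat.sqrt (8*n) + 1) / 2 = q + 1 :=
          fval (q+1) n (by omega) (by omega) (by omega)
        have hnm1 : 1 ≤ n - (q+1) := by omega
        have hnm : g (n - (q+1)) = q := by
          rw [ih (n-(q+1)) (by omega) hnm1]
          exact fval q (n-(q+1)) hq2 (by omega) (by omega)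
        rw [hnm, hfn]
end

section
/- The sequence g defined by g(1) = 1 and g(n) = g(n - g(n-1)) + 1 for n ≥ 2 takes each positive integer value m exactly m times; that is, for every m ≥ 1, the set {n : g(n) = m} has cardinality m. -/
private def T : ℕ → ℕ
  | 0 => 0
  | (m+1) => T m + (m+1)

private lemma T_le (m : ℕ) : m ≤ T m := by
  induction m with
  | zero => simp [T]
  | succ k ih =>
    have : T (k+1) = T k + (k+1) := rfl
    omega

private lemma key (g : ℕ → ℕ) (h1 : g 1 = 1)
    (hrec : ∀ n, 2 ≤ n → g n = g (n - g (n - 1)) + 1) :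
    ∀ n m, T m < n → n ≤ T (m+1) → g n = m + 1 := by
  intro n
  induction n using Nat.strong_induction_on with
  | _ n ih =>
    intro m hlt hle
    rcases Nat.lt_or_ge n 2 with hn | hn
    · have hn1 : n = 1 := by omega
      subst hn1
      have hm : m = 0 := by
        by_contra h
        have := T_le m
        omega
      simpa [hm] using h1
    · have hm1 : 1 ≤ m := by
        by_contra h
        have : m = 0 := by omega
        subst this
        have e0 : T 0 = 0 := rfl
        have e1 : T (0+1) = 1 := rfl
        omega
      obtain ⟨k, rfl⟩ : ∃ k, m = k + 1 := ⟨m - 1, by omega⟩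
      have hTk1 : T (k+1) = T k + (k+1) := rfl
      have hTk2 : T (k+2) = T (k+1) + (k+2) := rfl
      have hTk2' : T (k+1+1) = T (k+2) := rfl
      rcases Nat.lt_or_ge n (T (k+1) + 2) with hcase | hcase
      · -- n = T (k+1) + 1
        have hn' : n = T (k+1) + 1 := by omega
        have hprev : g (n - 1) = k + 1 := by
          apply ih (n-1) (by omega) k <;> omega
        have h2 : g n = g (n - g (n-1)) + 1 := hrec n hn
        rw [hprev] at h2
        have harg : g (n - (k+1)) = k + 1 := by
          apply ih (n - (k+1)) (by omega) k <;> omega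
        omega
      · -- T (k+1) + 2 ≤ n ≤ T (k+2)
        have hprev : g (n - 1) = k + 2 := by
          apply ih (n-1) (by omega) (k+1) <;> omega
        have h2 : g n = g (n - g (n-1)) + 1 := hrec n hn
        rw [hprev] at h2
        have harg : g (n - (k+2)) = k + 1 := by
          apply ih (n - (k+2)) (by omega) k <;> omega
        omega

private lemma exists_interval : ∀ n : ℕ, 1 ≤ n → ∃ k, T k < n ∧ n ≤ T (k+1) := by
  intro n
  induction n with
  | zero => omega
  | succ p ih =>
    intro _
    rcases Nat.lt_or_ge p 1 with hp | hp
    · refine ⟨0, ?_, ?_⟩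
      · have e0 : T 0 = 0 := rfl
        omega
      · have e1 : T (0+1) = 1 := rfl
        omega
    · obtain ⟨k, hk1, hk2⟩ := ih hp
      rcases Nat.lt_or_ge p (T (k+1)) with h | h
      · exact ⟨k, by omega, by omega⟩
      · have hp' : p = T (k+1) := by omega
        refine ⟨k+1, by omega, ?_⟩
        have e2 : T (k+1+1) = T (k+1) + (k+2) := rfl
        omega

/-- Golomb's triangular recursion takes each positive integer value `m` exactly `m` times. -/
theorem golomb_frequency (g : ℕ → ℕ)
    (h1 : g 1 = 1)
    (hrec : ∀ n, 2 ≤ n → g n = g (n - g (n - 1)) + 1) :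
    ∀ m, 1 ≤ m → {n : ℕ | 1 ≤ n ∧ g n = m}.ncard = m := by
  intro m hm
  obtain ⟨k, rfl⟩ : ∃ k, m = k + 1 := ⟨m - 1, by omega⟩
  have hset : {n : ℕ | 1 ≤ n ∧ g n = k + 1} = Set.Ioc (T k) (T (k+1)) := by
    ext n
    simp only [Set.mem_setOf_eq, Set.mem_Ioc]
    constructor
    · rintro ⟨hn, hg⟩
      obtain ⟨j, hj1, hj2⟩ := exists_interval n hn
      have := key g h1 hrec n j hj1 hj2
      have hjk : j = k := by omega
      subst hjk
      exact ⟨hj1, hj2⟩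
    · rintro ⟨h1', h2'⟩
      refine ⟨by omega, key g h1 hrec n k h1' h2'⟩
  rw [hset, ← Finset.coe_Ioc, Set.ncard_coe_finset, Nat.card_Ioc]
  have : T (k+1) = T k + (k+1) := rfl
  omega
end

section
/- The sequence g defined by g(1) = 1 and g(n) = g(n - g(n-1)) + 1 for n ≥ 2 is slow: for all n ≥ 1, g(n+1) - g(n) is either 0 or 1. -/
/-- Golomb's triangular recursion is slow: consecutive differences are 0 or 1. -/
theorem golomb_slow (g : ℕ → ℕ)
    (h1 : g 1 = 1)
    (hrec : ∀ n, 2 ≤ n → g n = g (n - g (n - 1)) + 1) :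
    ∀ n, 1 ≤ n → g (n + 1) = g n ∨ g (n + 1) = g n + 1 := by
  have key : ∀ n, 1 ≤ n →
      1 ≤ g n ∧ g n ≤ n ∧ (g (n + 1) = g n ∨ g (n + 1) = g n + 1) := by
    intro n
    induction n using Nat.strong_induction_on with
    | _ n IH =>
      intro hn
      rcases Nat.lt_or_ge n 2 with h2 | h2
      · -- n = 1
        interval_cases n
        have hg2 : g 2 = 2 := by
          have := hrec 2 le_rfl
          simp [h1] at this
          omega
        refine ⟨by omega, by omega, ?_⟩
        right; show g 2 = g 1 + 1; omega
      · -- n ≥ 2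
        obtain ⟨hg1, hg2, hg3⟩ := IH (n - 1) (by omega) (by omega)
        set i := n - 1 - g (n - 1 - 1) with hi
        have hprev : g (n - 1 + 1) = g (n - 1) ∨ g (n - 1 + 1) = g (n - 1) + 1 := hg3
        rw [show n - 1 + 1 = n by omega] at hprev
        -- bounds for i' := n - g (n-1)
        have hi' : 1 ≤ n - g (n - 1) ∧ n - g (n - 1) ≤ n - 1 := by omega
        set k := n - g (n - 1) with hk
        obtain ⟨hk1, hk2, hk3⟩ := IH k (by omega) (by omega)
        have hgn : g n = g k + 1 := hrec n h2
        have hgn1 : g (n + 1) = g (n + 1 - g n) + 1 := by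
          have := hrec (n + 1) (by omega)
          simpa using this
        refine ⟨by omega, by omega, ?_⟩
        rcases hprev with h | h
        · -- g n = g (n-1) : n+1 - g n = k + 1
          have : n + 1 - g n = k + 1 := by omega
          rw [this] at hgn1
          rcases hk3 with h' | h'
          · left; omega
          · right; omega
        · -- g n = g (n-1) + 1 : n+1 - g n = k
          have : n + 1 - g n = k := by omega
          rw [this] at hgn1
          left; omega
  intro n hn
  exact (key n hn).2.2
end

section
/- Fix j ≥ 1 and s ≥ 0. Define the sequence w : ℕ+ → ℕ by w(n) = mj + 1 where m is the largest integer with 1 + ∑_{i=0}^{m-1}(s + ij + 1) ≤ n (with w(n) = 1 if no such m ≥ 1 exists, i.e., m = 0). Then w satisfies the recursion w(n) = w(n - s - w(n - j)) + j for all n > 3 + 2s + j. -/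
/-- Threshold positions: `golombThresh j s m = 1 + ∑_{i=0}^{m-1} (s + i*j + 1)`. -/
def golombThresh (j s m : ℕ) : ℕ := 1 + ∑ i ∈ Finset.range m, (s + i * j + 1)

/-- The block sequence: `w n = m*j + 1` where `m` is the largest integer with
    `1 + ∑_{i=0}^{m-1} (s + i*j + 1) ≤ n` (and `w n = 1` if no such `m ≥ 1` exists). -/
def golombW (j s n : ℕ) : ℕ :=
  j * Nat.findGreatest (fun m => golombThresh j s m ≤ n) n + 1

/-!
The thresholds `golombThresh j s m` cut the positive integers into consecutive blocks, the
`m`-th of length `s + m * j + 1`, on which `golombW` is constant, equal to `j * m + 1`. If `n`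
lies in block `k + 1` with `k ≥ 1`, then `n - j` lies in block `k + 1` or block `k`, and in
either case subtracting `s + golombW (n - j)` moves `n` back by the full length of that block,
landing in block `k`. This is possible since block `k + 1` is exactly `j` longer than block `k`.
-/

theorem StrictMono.exists_le_lt_succ {f : ℕ → ℕ} (hf : StrictMono f) {a n : ℕ}
    (h : f a ≤ n) : ∃ m, a ≤ m ∧ f m ≤ n ∧ n < f (m + 1) := by
  have hfg : ∀ m, f m ≤ n → m ≤ Nat.findGreatest (f · ≤ n) n := fun m hm =>
    Nat.le_findGreatest ((hf.id_le m).trans hm) hm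
  refine ⟨Nat.findGreatest (f · ≤ n) n, hfg a h,
    Nat.findGreatest_spec (P := (f · ≤ n)) ((hf.id_le a).trans h) h, ?_⟩
  by_contra! hle
  exact (hfg _ hle).not_gt (Nat.lt_succ_self _)

theorem StrictMono.findGreatest_le_eq {f : ℕ → ℕ} (hf : StrictMono f) {m n : ℕ}
    (h₁ : f m ≤ n) (h₂ : n < f (m + 1)) : Nat.findGreatest (f · ≤ n) n = m := by
  rw [Nat.findGreatest_eq_iff]
  refine ⟨(hf.id_le m).trans h₁, fun _ => h₁, fun l hml _ hl => ?_⟩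
  exact (hf.monotone hml).not_gt (h₂.trans_le' hl)

section

variable (j s : ℕ)

theorem golombThresh_zero : golombThresh j s 0 = 1 := rfl

theorem golombThresh_succ (m : ℕ) :
    golombThresh j s (m + 1) = golombThresh j s m + (s + m * j + 1) := by
  simp only [golombThresh, Finset.sum_range_succ]
  omega

theorem golombThresh_strictMono : StrictMono (golombThresh j s) :=
  strictMono_nat_of_lt_succ fun m => by rw [golombThresh_succ]; omega

theorem golombW_eq_of_golombThresh_le_of_lt {m n : ℕ} (h₁ : golombThresh j s m ≤ n)
    (h₂ : n < golombThresh j s (m + 1)) : golombW j s n = j * m + 1 := by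
  rw [golombW, (golombThresh_strictMono j s).findGreatest_le_eq h₁ h₂]

theorem golombW_recursion_of_mem_block {k n : ℕ} (hk : 1 ≤ k)
    (h₁ : golombThresh j s (k + 1) ≤ n) (h₂ : n < golombThresh j s (k + 1 + 1)) :
    golombW j s n = golombW j s (n - s - golombW j s (n - j)) + j := by
  have hT₁ := golombThresh_succ j s k
  have hT₂ := golombThresh_succ j s (k + 1)
  have hj : j ≤ k * j := Nat.le_mul_of_pos_left j hk
  have hjk₁ : j * (k + 1) = j * k + j := mul_add_one j k
  have hkj₁ : (k + 1) * j = k * j + j := add_one_mul k j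
  have hjk : j * k = k * j := mul_comm j k
  rw [golombW_eq_of_golombThresh_le_of_lt j s h₁ h₂]
  by_cases hnj : golombThresh j s (k + 1) + j ≤ n
  · rw [golombW_eq_of_golombThresh_le_of_lt j s (m := k + 1) (n := n - j) (by omega) (by omega),
      golombW_eq_of_golombThresh_le_of_lt j s (m := k) (by omega) (by omega)]
    omega
  · rw [golombW_eq_of_golombThresh_le_of_lt j s (m := k) (n := n - j) (by omega) (by omega),
      golombW_eq_of_golombThresh_le_of_lt j s (m := k) (by omega) (by omega)]
    omega

end

theorem golombW_recursion_general (j s : ℕ) :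
    ∀ n, 3 + 2 * s + j < n →
      golombW j s n = golombW j s (n - s - golombW j s (n - j)) + j := by
  intro n hn
  have hT₂ : golombThresh j s 2 ≤ n := by
    rw [golombThresh_succ, golombThresh_succ, golombThresh_zero]
    omega
  obtain ⟨m, hm, h₁, h₂⟩ := (golombThresh_strictMono j s).exists_le_lt_succ hT₂
  obtain ⟨k, rfl⟩ : ∃ k, m = k + 1 := ⟨m - 1, by omega⟩
  exact golombW_recursion_of_mem_block j s (by omega) h₁ h₂

/-- The block sequence `w` satisfies the generalized Golomb recursion with `λ = 1`
    for all `n > 3 + 2s + j`. -/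
theorem golombW_recursion (j s : ℕ) (hj : 1 ≤ j) :
    ∀ n, 3 + 2 * s + j < n →
      golombW j s n = golombW j s (n - s - golombW j s (n - j)) + j :=
  golombW_recursion_general j s
end

section
/- Fix s ≥ 0, and let g be the sequence taking value m + 1 exactly s + m + 1 times for each m ≥ 0 (with one extra leading 1), i.e., the solution of g(n) = g(n − s − g(n−1)) + 1. Then for all n ≥ 1, g(n) = ⌊(⌊√(8(n + s(s+1)/2))⌋ + 1)/2⌋ − s. -/
theorem Nat.sqrt_eight_mul_add_one_div_two {N k : ℕ} (hlo : k * (k + 1) < 2 * N)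
    (hhi : 2 * N ≤ (k + 1) * (k + 2)) : (Nat.sqrt (8 * N) + 1) / 2 = k + 1 := by
  have hsqrt_ge : 2 * k + 1 ≤ Nat.sqrt (8 * N) := Nat.le_sqrt.mpr (by nlinarith)
  have hsqrt_lt : Nat.sqrt (8 * N) < 2 * k + 3 := Nat.sqrt_lt.mpr (by nlinarith)
  omega

theorem succ_le_golombThresh (j s m : ℕ) : m + 1 ≤ golombThresh j s m := by
  have h := Finset.card_nsmul_le_sum (Finset.range m) (fun i => s + i * j + 1) 1
    (fun _ _ => Nat.le_add_left 1 _)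
  simp only [Finset.card_range, smul_eq_mul, mul_one] at h
  unfold golombThresh
  omega

theorem two_mul_golombThresh_one_add (s m : ℕ) :
    2 * golombThresh 1 s m + s * (s + 1) = 2 + (s + m) * (s + m + 1) := by
  induction m with
  | zero => simp [golombThresh]
  | succ m ih =>
    have hstep : golombThresh 1 s (m + 1) = golombThresh 1 s m + (s + m + 1) := by
      simp only [golombThresh, Finset.sum_range_succ, mul_one]; ring
    rw [hstep]; nlinarith [ih]

theorem golombThresh_le_lt_succ_of_findGreatest_eq (j s : ℕ) {n M : ℕ} (hn : 1 ≤ n)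
    (hM : Nat.findGreatest (fun m => golombThresh j s m ≤ n) n = M) :
    golombThresh j s M ≤ n ∧ n < golombThresh j s (M + 1) := by
  have hthresh_zero : golombThresh j s 0 ≤ n := by simpa [golombThresh] using hn
  refine ⟨hM ▸ Nat.findGreatest_spec (P := fun m => golombThresh j s m ≤ n) (Nat.zero_le n)
    hthresh_zero, ?_⟩
  by_cases hMn : M + 1 ≤ n
  · exact not_le.mp <| Nat.findGreatest_is_greatest (P := fun m => golombThresh j s m ≤ n)
      (hM ▸ Nat.lt_succ_self M) hMn
  · -- the search bound `n` of `findGreatest` is not what stops it: thresholds outgrow indices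
    have := succ_le_golombThresh j s (M + 1)
    omega

/-- Closed form in the case `j = 1`: `g(n) = ⌊(⌊√(8(n + s(s+1)/2))⌋ + 1)/2⌋ − s`. -/
theorem golombW_j_one_closed_form (s : ℕ) :
    ∀ n, 1 ≤ n →
      golombW 1 s n = (Nat.sqrt (8 * (n + s * (s + 1) / 2)) + 1) / 2 - s := by
  intro n hn
  obtain ⟨M, hM⟩ : ∃ M, Nat.findGreatest (fun m => golombThresh 1 s m ≤ n) n = M := ⟨_, rfl⟩
  obtain ⟨hle, hlt⟩ := golombThresh_le_lt_succ_of_findGreatest_eq 1 s hn hM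
  have htri_even : 2 * (s * (s + 1) / 2) = s * (s + 1) :=
    Nat.two_mul_div_two_of_even (Nat.even_mul_succ_self s)
  have hthresh := two_mul_golombThresh_one_add s M
  have hthresh_succ := two_mul_golombThresh_one_add s (M + 1)
  have hsqrt : (Nat.sqrt (8 * (n + s * (s + 1) / 2)) + 1) / 2 = s + M + 1 :=
    Nat.sqrt_eight_mul_add_one_div_two (by nlinarith) (by nlinarith)
  rw [hsqrt, golombW, hM]
  omega
end

section
/- The sequence a(n) defined by a(1) = 1, a(2) = a(3) = 3, and a(n) = a(n − a(n−2)) + 2 for n ≥ 4 is the sequence in which each odd number 2m + 1 appears exactly 2m + 1 times; consequently a(n) is the unique odd number 2m+1 such that m² < n ≤ (m+1)². -/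
/-- The sequence `a(1) = 1`, `a(2) = a(3) = 3`, `a(n) = a(n − a(n−2)) + 2` for `n ≥ 4`
    lists each odd number `2m+1` exactly `2m+1` times: `a(n) = 2m+1` precisely when
    `m² < n ≤ (m+1)²`. -/
theorem A001650_blocks (a : ℕ → ℕ)
    (h1 : a 1 = 1) (h2 : a 2 = 3) (h3 : a 3 = 3)
    (hrec : ∀ n, 4 ≤ n → a n = a (n - a (n - 2)) + 2) :
    ∀ n, 1 ≤ n → ∀ m : ℕ, m ^ 2 < n → n ≤ (m + 1) ^ 2 → a n = 2 * m + 1 := by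
  intro n
  induction n using Nat.strong_induction_on with
  | _ n ih =>
  intro hn m hlo hhi
  rcases lt_or_ge n 4 with h4 | h4
  · interval_cases n
    · have hm : m = 0 := by nlinarith
      subst hm; simpa using h1
    · have hm : m = 1 := by
        have h1' : m < 2 := by nlinarith
        interval_cases m
        · simp at hhi
        · rfl
      subst hm; simpa using h2
    · have hm : m = 1 := by
        have h1' : m < 2 := by nlinarith
        interval_cases m
        · simp at hhi
        · rfl
      subst hm; simpa using h3
  · obtain ⟨k, rfl⟩ : ∃ k, m = k + 1 := by
      have hm0 : m ≠ 0 := by rintro rfl; simp at hhi; omega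
      exact ⟨m - 1, by omega⟩
    have e1 : (k+1)^2 = k^2 + 2*k + 1 := by ring
    have e2 : (k+1+1)^2 = k^2 + 4*k + 4 := by ring
    rw [e1] at hlo
    rw [e2] at hhi
    obtain ⟨K, hK⟩ : ∃ K, k^2 = K := ⟨_, rfl⟩
    rw [hK] at hlo hhi
    rw [hrec n h4]
    by_cases hc : K + 2*k + 1 < n - 2
    · have hA : a (n-2) = 2*(k+1)+1 :=
        ih (n-2) (by omega) (by omega) (k+1) (by rw [e1, hK]; omega)
          (by rw [e2, hK]; omega)
      rw [hA]
      have hB : a (n - (2*(k+1)+1)) = 2*k+1 :=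
        ih (n - (2*(k+1)+1)) (by omega) (by omega) k (by rw [hK]; omega)
          (by rw [e1, hK]; omega)
      rw [hB]; ring
    · have hk1 : 1 ≤ k := by
        rcases Nat.eq_zero_or_pos k with rfl | h
        · simp at hK; omega
        · exact h
      have hA : a (n-2) = 2*k+1 :=
        ih (n-2) (by omega) (by omega) k (by rw [hK]; omega)
          (by rw [e1, hK]; omega)
      rw [hA]
      have hB : a (n - (2*k+1)) = 2*k+1 :=
        ih (n - (2*k+1)) (by omega) (by omega) k (by rw [hK]; omega)
          (by rw [e1, hK]; omega)
      rw [hB]; ring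
end

section
/- For the sequence a with a(1) = 1, a(2) = a(3) = 3, a(n) = a(n − a(n−2)) + 2 for n ≥ 4, the closed form a(n) = 2⌊√(n−1)⌋ + 1 holds for all n ≥ 1. -/
lemma sqrt_eq_of' (x t : ℕ) (h1 : t*t ≤ x) (h2 : x < (t+1)*(t+1)) : Nat.sqrt x = t := by
  have a1 : t ≤ Nat.sqrt x := Nat.le_sqrt'.mpr (by rwa [pow_two])
  have a2 : Nat.sqrt x < t + 1 := Nat.sqrt_lt'.mpr (by rwa [pow_two])
  omega

lemma sub_one_sq' (k : ℕ) (h : 1 ≤ k) : (k-1)*(k-1) + 2*k = k*k + 1 := by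
  obtain ⟨m, rfl⟩ : ∃ m, k = m + 1 := ⟨k-1, by omega⟩
  simp only [Nat.add_sub_cancel]; ring

lemma two_mul_le_sq (k : ℕ) : 2 * k ≤ k * k + 1 := by
  zify; nlinarith [sq_nonneg ((k:ℤ) - 1)]

/-- Closed form for A001650: `a(n) = 2⌊√(n−1)⌋ + 1`. -/
theorem A001650_closed_form (a : ℕ → ℕ)
    (h1 : a 1 = 1) (h2 : a 2 = 3) (h3 : a 3 = 3)
    (hrec : ∀ n, 4 ≤ n → a n = a (n - a (n - 2)) + 2) :
    ∀ n, 1 ≤ n → a n = 2 * Nat.sqrt (n - 1) + 1 := by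
  intro n
  induction n using Nat.strong_induction_on with
  | _ n ih =>
    intro hn
    rcases lt_or_ge n 4 with h4 | h4
    · have s0 : Nat.sqrt 0 = 0 := sqrt_eq_of' 0 0 (by norm_num) (by norm_num)
      have s1 : Nat.sqrt 1 = 1 := sqrt_eq_of' 1 1 (by norm_num) (by norm_num)
      have s2 : Nat.sqrt 2 = 1 := sqrt_eq_of' 2 1 (by norm_num) (by norm_num)
      interval_cases n
      · norm_num [h1, s0]
      · norm_num [h2, s1]
      · norm_num [h3, s2]
    · set k := Nat.sqrt (n - 1) with hk
      have hk1 : k * k ≤ n - 1 := by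
        have := Nat.sqrt_le' (n - 1); rwa [pow_two] at this
      have hk2 : n - 1 < (k+1) * (k+1) := by
        have := Nat.lt_succ_sqrt' (n - 1); rwa [pow_two] at this
      have e3 : (k+1)*(k+1) = k*k + 2*k + 1 := by ring
      have h2k := two_mul_le_sq k
      have hrecn := hrec n h4
      have hih2 : a (n - 2) = 2 * Nat.sqrt (n - 3) + 1 := by
        have := ih (n - 2) (by omega) (by omega)
        rwa [show n - 2 - 1 = n - 3 by omega] at this
      rcases le_or_gt (k * k + 3) n with hA | hB
      · -- here Nat.sqrt (n-3) = k
        have hk1' : 1 ≤ k := by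
          rcases Nat.lt_or_ge k 1 with h | h
          · interval_cases k <;> omega
          · exact h
        have e1 : k - 1 + 1 = k := by omega
        have e2 := sub_one_sq' k (by omega)
        have hm : Nat.sqrt (n - 3) = k := by
          apply sqrt_eq_of' <;> omega
        rw [hm] at hih2
        have hjlt : 2 * k + 1 < n := by omega
        have hj : a (n - (2 * k + 1)) = 2 * Nat.sqrt (n - (2*k+1) - 1) + 1 :=
          ih _ (by omega) (by omega)
        have hs : Nat.sqrt (n - (2*k+1) - 1) = k - 1 := by
          apply sqrt_eq_of'
          · omega
          · rw [e1]; omega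
        rw [hih2] at hrecn
        rw [hrecn, hj, hs]
        omega
      · -- here Nat.sqrt (n-3) = k - 1
        have hk2' : 2 ≤ k := by
          rcases Nat.lt_or_ge k 2 with h | h
          · interval_cases k <;> omega
          · exact h
        have e1 : k - 1 + 1 = k := by omega
        have e2 := sub_one_sq' k (by omega)
        have hm : Nat.sqrt (n - 3) = k - 1 := by
          apply sqrt_eq_of'
          · omega
          · rw [e1]; omega
        rw [hm] at hih2
        have hjlt : 2 * (k - 1) + 1 < n := by omega
        have hj : a (n - (2 * (k-1) + 1)) = 2 * Nat.sqrt (n - (2*(k-1)+1) - 1) + 1 :=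
          ih _ (by omega) (by omega)
        have hs : Nat.sqrt (n - (2*(k-1)+1) - 1) = k - 1 := by
          apply sqrt_eq_of'
          · omega
          · rw [e1]; omega
        rw [hih2] at hrecn
        rw [hrecn, hj, hs]
        omega
end
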